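/- arXiv:1512.07276 — 2 statements merged into one kernel-verified Lean document; each statement's English description precedes it below -/
import Mathlib

section
/- If A is a real analytic function on a connected open set U in ℝ^d that is not identically zero, then its zero set {x ∈ U : A(x) = 0} has d-dimensional Lebesgue measure zero. -/
/-! Say that a measure has null analytic zero sets if every real analytic function that does not
vanish identically on a connected open set has a null zero set there. On `ℝ` this holds for any
measure without atoms, since the zeros are isolated and hence countable. The property passes to
products: near a point of `E × F` work on a product of balls `P × I` and pick `(a, b)` with
`f (a, b) ≠ 0`. The zero set `N` of `x ↦ f (x, b)` on `P` is `μ`-null, and for `x ∈ P \ N` the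
slice `y ↦ f (x, y)` does not vanish at `b`, so its zero set is `ν`-null; Fubini concludes. It is
also invariant under measure-preserving linear isomorphisms, which identify `ℝ × ℝⁿ` with `ℝⁿ⁺¹`
and `ℝᵈ` with Euclidean space. -/

open MeasureTheory Metric Set Filter Topology

theorem ContinuousOn.measurableSet_inter_preimage {X Y : Type*} [TopologicalSpace X]
    [MeasurableSpace X] [OpensMeasurableSpace X] [TopologicalSpace Y] {f : X → Y} {V : Set X}
    {t : Set Y} (hf : ContinuousOn f V) (hV : IsOpen V) (ht : IsClosed t) :
    MeasurableSet (V ∩ f ⁻¹' t) := by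
  have h : V ∩ f ⁻¹' t = V \ (V ∩ f ⁻¹' tᶜ) := by ext; simp +contextual
  rw [h]
  exact hV.measurableSet.diff (hf.isOpen_inter_preimage hV ht.isOpen_compl).measurableSet

theorem AnalyticOnNhd.countable_setOf_eq_zero {𝕜 F : Type*} [NontriviallyNormedField 𝕜]
    [SecondCountableTopology 𝕜] [NormedAddCommGroup F] [NormedSpace 𝕜 F] {f : 𝕜 → F}
    {U : Set 𝕜} (hf : AnalyticOnNhd 𝕜 f U) (hU : IsPreconnected U) (hne : ∃ z ∈ U, f z ≠ 0) :
    {z ∈ U | f z = 0}.Countable := by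
  have : DiscreteTopology {z ∈ U | f z = 0} := by
    rw [discreteTopology_subtype_iff]
    rintro z ⟨hzU, -⟩
    rw [inf_principal_eq_bot]
    rcases (hf z hzU).eventually_eq_zero_or_eventually_ne_zero with hzero | hnonzero
    · obtain ⟨w, hwU, hfw⟩ := hne
      exact absurd (hf.eqOn_zero_of_preconnected_of_eventuallyEq_zero hU hzU hzero hwU) hfw
    · filter_upwards [hnonzero] with w hfw using fun hw ↦ hfw hw.2
  exact countable_coe_iff.mp (TopologicalSpace.separableSpace_iff_countable.mp inferInstance)

section

variable {E F : Type*} [NormedAddCommGroup E] [NormedSpace ℝ E] [MeasurableSpace E]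
  [NormedAddCommGroup F] [NormedSpace ℝ F] [MeasurableSpace F]

def HasNullAnalyticZeroSets (μ : Measure E) : Prop :=
  ∀ ⦃V : Set E⦄, IsOpen V → IsPreconnected V → ∀ ⦃f : E → ℝ⦄, AnalyticOnNhd ℝ f V →
    (∃ y ∈ V, f y ≠ 0) → μ {x ∈ V | f x = 0} = 0

theorem hasNullAnalyticZeroSets_of_subsingleton [Subsingleton E] (μ : Measure E) :
    HasNullAnalyticZeroSets μ := by
  rintro V - - f - ⟨y, -, hfy⟩
  convert measure_empty (μ := μ)
  ext x
  simp [Subsingleton.elim x y, hfy]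

theorem hasNullAnalyticZeroSets_real (μ : Measure ℝ) [NullSingletonClass μ] :
    HasNullAnalyticZeroSets μ :=
  fun _ _ hVc _ hf hne ↦ (hf.countable_setOf_eq_zero hVc hne).measure_zero μ

theorem HasNullAnalyticZeroSets.of_measurePreserving [BorelSpace E] [BorelSpace F]
    {μ : Measure E} {ν : Measure F} (h : HasNullAnalyticZeroSets μ) (L : E ≃L[ℝ] F)
    (hL : MeasurePreserving L μ ν) : HasNullAnalyticZeroSets ν := by
  rintro V hV hVc f hf ⟨y, hyV, hfy⟩
  rw [← hL.measure_preimage_emb L.toHomeomorph.measurableEmbedding]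
  exact h (hV.preimage L.continuous) (L.toHomeomorph.isPreconnected_preimage.mpr hVc)
    (hf.comp (L.analyticOnNhd _) (mapsTo_preimage _ _)) ⟨L.symm y, by simpa, by simpa⟩

variable [OpensMeasurableSpace E] [OpensMeasurableSpace F] [SecondCountableTopology F]
  {μ : Measure E} {ν : Measure F}

theorem HasNullAnalyticZeroSets.measure_prod_sep_eq_zero [SFinite ν]
    (hμ : HasNullAnalyticZeroSets μ) (hν : HasNullAnalyticZeroSets ν) {P : Set E} {I : Set F}
    (hP : IsOpen P) (hPc : IsPreconnected P) (hI : IsOpen I) (hIc : IsPreconnected I)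
    {f : E × F → ℝ} (hf : AnalyticOnNhd ℝ f (P ×ˢ I)) (hne : ∃ z ∈ P ×ˢ I, f z ≠ 0) :
    μ.prod ν {z ∈ P ×ˢ I | f z = 0} = 0 := by
  obtain ⟨⟨a, b⟩, ⟨ha, hb⟩, hfab⟩ := hne
  have hslice (x : E) (hx : x ∈ P) : AnalyticOnNhd ℝ (fun y ↦ f (x, y)) I :=
    hf.comp (analyticOnNhd_const.prod analyticOnNhd_id) fun y hy ↦ ⟨hx, hy⟩
  have hcut : AnalyticOnNhd ℝ (fun x ↦ f (x, b)) P :=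
    hf.comp (analyticOnNhd_id.prod analyticOnNhd_const) fun x hx ↦ ⟨hx, hb⟩
  have hcut_null : μ {x ∈ P | f (x, b) = 0} = 0 := hμ hP hPc hcut ⟨a, ha, hfab⟩
  have hmeas : MeasurableSet {z ∈ P ×ˢ I | f z = 0} :=
    hf.continuousOn.measurableSet_inter_preimage (hP.prod hI) isClosed_singleton
  rw [Measure.measure_prod_null hmeas]
  filter_upwards [measure_eq_zero_iff_ae_notMem.mp hcut_null] with x hx
  by_cases hxP : x ∈ P
  · have hfxb : f (x, b) ≠ 0 := fun h ↦ hx ⟨hxP, h⟩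
    simpa [hxP] using hν hI hIc (hslice x hxP) ⟨b, hb, hfxb⟩
  · simp [hxP]

theorem HasNullAnalyticZeroSets.prod [SecondCountableTopology E] [SFinite ν]
    (hμ : HasNullAnalyticZeroSets μ) (hν : HasNullAnalyticZeroSets ν) :
    HasNullAnalyticZeroSets (μ.prod ν) := by
  rintro V hV hVc f hf ⟨z₀, hz₀, hfz₀⟩
  refine measure_null_of_locally_null _ fun z ⟨hz, _⟩ ↦ ?_
  obtain ⟨r, hr, hball⟩ := Metric.isOpen_iff.mp hV z hz
  refine ⟨{w ∈ ball z r | f w = 0}, ?_, ?_⟩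
  · exact mem_nhdsWithin_iff_exists_mem_nhds_inter.mpr
      ⟨ball z r, ball_mem_nhds z hr, fun w ⟨hw, _, hfw⟩ ↦ ⟨hw, hfw⟩⟩
  have hne : ∃ w ∈ ball z r, f w ≠ 0 := by
    by_contra! h
    exact hfz₀ (hf.eqOn_zero_of_preconnected_of_eventuallyEq_zero hVc hz
      (eventually_of_mem (ball_mem_nhds z hr) h) hz₀)
  rw [← ball_prod_same] at hne ⊢
  exact hμ.measure_prod_sep_eq_zero hν isOpen_ball (convex_ball _ _).isPreconnected isOpen_ball
    (convex_ball _ _).isPreconnected (hf.mono (ball_prod_same z.1 z.2 r ▸ hball)) hne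

end

theorem hasNullAnalyticZeroSets_volume_pi (n : ℕ) :
    HasNullAnalyticZeroSets (volume : Measure (Fin n → ℝ)) := by
  induction n with
  | zero => exact hasNullAnalyticZeroSets_of_subsingleton _
  | succ n ih =>
    refine ((hasNullAnalyticZeroSets_real volume).prod ih).of_measurePreserving
      (Fin.consEquivL ℝ fun _ ↦ ℝ) ?_
    have hcons : ⇑(Fin.consEquivL ℝ fun _ ↦ ℝ) =
        (MeasurableEquiv.piFinSuccAbove (fun _ : Fin (n + 1) ↦ ℝ) 0).symm := by
      funext p i
      cases i using Fin.cases <;> simp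
    rw [← Measure.volume_eq_prod, hcons]
    exact (volume_preserving_piFinSuccAbove (fun _ ↦ ℝ) 0).symm

theorem zero_set_of_analytic_measure_zero {d : ℕ}
    (U : Set (EuclideanSpace ℝ (Fin d))) (hU : IsOpen U) (hUconn : IsConnected U)
    (A : EuclideanSpace ℝ (Fin d) → ℝ) (hA : AnalyticOn ℝ A U)
    (hne : ¬ ∀ x ∈ U, A x = 0) :
    volume {x ∈ U | A x = 0} = 0 := by
  push Not at hne
  exact (hasNullAnalyticZeroSets_volume_pi d).of_measurePreserving
    (EuclideanSpace.equiv (Fin d) ℝ).symm (PiLp.volume_preserving_toLp _) hU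
    hUconn.isPreconnected (hU.analyticOn_iff_analyticOnNhd.mp hA) hne
end

section
/- Let A be real analytic on a connected open set U ⊆ ℝ^d, not identically zero. Then the zero set F(A) = {x ∈ U : A(x) = 0} is contained in the countable union over multi-indices t ∈ ℕ^d of the sets G(D^t A) = {x ∈ U : (D^t A)(x) = 0, ∇(D^t A)(x) ≠ 0}. -/
noncomputable def pderivE {d : ℕ} (j : Fin d) (f : EuclideanSpace ℝ (Fin d) → ℝ) :
    EuclideanSpace ℝ (Fin d) → ℝ :=
  fun x => fderiv ℝ f x (EuclideanSpace.single j 1)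

noncomputable def mderivList {d : ℕ} :
    List (Fin d) → (EuclideanSpace ℝ (Fin d) → ℝ) → (EuclideanSpace ℝ (Fin d) → ℝ)
  | [], f => f
  | j :: l, f => mderivList l (pderivE j f)

/-- The iterated partial derivative `D^t` for a multi-index `t : Fin d → ℕ`. -/
noncomputable def mderiv {d : ℕ} (t : Fin d → ℕ) (f : EuclideanSpace ℝ (Fin d) → ℝ) :
    EuclideanSpace ℝ (Fin d) → ℝ :=
  mderivList ((List.finRange d).flatMap fun j => List.replicate (t j) j) f

/-!
Let `x` be a zero of `A` lying in no `G(D^t A)`, so every `D^t A` vanishing at `x` has vanishing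
gradient there. Partial derivatives of a smooth function commute, so every iterated partial
derivative of `A`, taken in any order, agrees near `x` with some `D^t A`; by induction on the order
they all vanish at `x`. Hence all Fréchet derivatives of `A` vanish at `x`, the Taylor series of `A`
at `x` is zero, and the identity theorem forces `A = 0` on the connected set `U`.
-/

open Set Filter Topology
open scoped ContDiff

lemma count_flatMap_finRange_replicate {d : ℕ} (t : Fin d → ℕ) (i : Fin d) :
    ((List.finRange d).flatMap fun j ↦ List.replicate (t j) j).count i = t i := by
  simp [List.count_flatMap, List.count_replicate, ← List.sum_toFinset _ (List.nodup_finRange d)]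

section PartialDerivatives

variable {d : ℕ} {U : Set (EuclideanSpace ℝ (Fin d))} {f g : EuclideanSpace ℝ (Fin d) → ℝ}
  {x : EuclideanSpace ℝ (Fin d)}

lemma ContDiffAt.pderivE (hf : ContDiffAt ℝ ∞ f x) (j : Fin d) :
    ContDiffAt ℝ ∞ (pderivE j f) x :=
  (hf.fderiv_right le_rfl).continuousLinearMap_comp
    (ContinuousLinearMap.apply ℝ ℝ (EuclideanSpace.single j 1))

lemma ContDiffOn.pderivE (hU : IsOpen U) (hf : ContDiffOn ℝ ∞ f U) (j : Fin d) :
    ContDiffOn ℝ ∞ (pderivE j f) U :=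
  (hf.fderiv_of_isOpen hU le_rfl).continuousLinearMap_comp
    (ContinuousLinearMap.apply ℝ ℝ (EuclideanSpace.single j 1))

lemma Filter.EventuallyEq.pderivE_eq (h : f =ᶠ[𝓝 x] g) (j : Fin d) :
    pderivE j f x = pderivE j g x := by
  simp only [pderivE, h.fderiv_eq]

lemma Set.EqOn.pderivE (hU : IsOpen U) (h : EqOn f g U) (j : Fin d) :
    EqOn (pderivE j f) (pderivE j g) U := fun _ hx ↦
  (Filter.eventuallyEq_of_mem (hU.mem_nhds hx) h).pderivE_eq j

lemma Set.EqOn.mderivList (hU : IsOpen U) (l : List (Fin d)) (h : EqOn f g U) :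
    EqOn (mderivList l f) (mderivList l g) U := by
  induction l generalizing f g with
  | nil => exact h
  | cons j l ih => exact ih (h.pderivE hU j)

lemma pderivE_pderivE_comm (hf : ContDiffAt ℝ ∞ f x) (a b : Fin d) :
    pderivE a (pderivE b f) x = pderivE b (pderivE a f) x := by
  have hf' : HasFDerivAt (fderiv ℝ f) (fderiv ℝ (fderiv ℝ f) x) x :=
    (hf.fderiv_right (m := 1) (WithTop.coe_le_coe.2 le_top)).differentiableAt one_ne_zero
      |>.hasFDerivAt
  have hpartial (j : Fin d) : fderiv ℝ (pderivE j f) x =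
      (ContinuousLinearMap.apply ℝ ℝ (EuclideanSpace.single j 1)).comp
        (fderiv ℝ (fderiv ℝ f) x) :=
    ((ContinuousLinearMap.apply ℝ ℝ (EuclideanSpace.single j 1)).hasFDerivAt.comp x hf' :)
      |>.fderiv
  rw [pderivE, hpartial, pderivE, hpartial]
  have hsymm : IsSymmSndFDerivAt ℝ f x := hf.isSymmSndFDerivAt <| by
    rw [minSmoothness_of_isRCLikeNormedField]
    exact WithTop.coe_le_coe.2 le_top
  exact hsymm.eq _ _

lemma mderivList_eqOn_of_perm (hU : IsOpen U) (hf : ContDiffOn ℝ ∞ f U)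
    {l₁ l₂ : List (Fin d)} (h : l₁.Perm l₂) : EqOn (mderivList l₁ f) (mderivList l₂ f) U := by
  induction h generalizing f with
  | nil => exact eqOn_refl _ _
  | cons j _ ih => exact ih (hf.pderivE hU j)
  | swap a b l =>
    exact Set.EqOn.mderivList hU l fun y hy ↦
      pderivE_pderivE_comm (hf.contDiffAt (hU.mem_nhds hy)) a b
  | trans _ _ ih₁ ih₂ => exact (ih₁ hf).trans (ih₂ hf)

lemma mderivList_append_singleton (l : List (Fin d)) (j : Fin d)
    (f : EuclideanSpace ℝ (Fin d) → ℝ) :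
    mderivList (l ++ [j]) f = pderivE j (mderivList l f) := by
  induction l generalizing f with
  | nil => rfl
  | cons a l ih => exact ih (pderivE a f)

lemma mderivList_eqOn_mderiv_count (hU : IsOpen U) (hf : ContDiffOn ℝ ∞ f U)
    (l : List (Fin d)) :
    EqOn (mderivList l f) (mderiv (fun j ↦ l.count j) f) U :=
  mderivList_eqOn_of_perm hU hf <|
    List.perm_iff_count.2 fun i ↦ (count_flatMap_finRange_replicate (fun j ↦ l.count j) i).symm

lemma pderivE_eq_zero_of_gradient_eq_zero (h : gradient f x = 0) (j : Fin d) :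
    pderivE j f x = 0 := by
  rw [pderivE, ← inner_gradient_left, h, inner_zero_left]

lemma mderivList_eq_zero_of_gradient_mderiv_eq_zero (hU : IsOpen U) (hf : ContDiffOn ℝ ∞ f U)
    (hx : x ∈ U) (hfx : f x = 0) (hG : ∀ t, mderiv t f x = 0 → gradient (mderiv t f) x = 0)
    (l : List (Fin d)) : mderivList l f x = 0 := by
  induction l using List.reverseRecOn with
  | nil => exact hfx
  | append_singleton l j ih =>
    have hcount : mderivList l f =ᶠ[𝓝 x] mderiv (fun j ↦ l.count j) f :=
      eventuallyEq_of_mem (hU.mem_nhds hx) (mderivList_eqOn_mderiv_count hU hf l)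
    rw [mderivList_append_singleton, hcount.pderivE_eq]
    exact pderivE_eq_zero_of_gradient_eq_zero (hG _ (hcount.eq_of_nhds ▸ ih)) j

lemma iteratedFDeriv_pderivE (hf : ContDiffAt ℝ ∞ f x) (j : Fin d) {n : ℕ}
    (m : Fin n → EuclideanSpace ℝ (Fin d)) :
    iteratedFDeriv ℝ n (pderivE j f) x m =
      iteratedFDeriv ℝ (n + 1) f x (Fin.snoc m (EuclideanSpace.single j 1)) := by
  rw [iteratedFDeriv_succ_apply_right, Fin.init_snoc, Fin.snoc_last]
  have h := (ContinuousLinearMap.apply ℝ ℝ (EuclideanSpace.single j 1)).iteratedFDeriv_comp_left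
    (hf.fderiv_right le_rfl) (i := n) (WithTop.coe_le_coe.2 le_top)
  exact congr($h m)

lemma iteratedFDeriv_eq_zero_of_mderivList_eq_zero (hf : ContDiffAt ℝ ∞ f x)
    (h : ∀ l, mderivList l f x = 0) (n : ℕ) : iteratedFDeriv ℝ n f x = 0 := by
  induction n generalizing f with
  | zero => ext m; simpa [mderivList] using h []
  | succ n ih =>
    refine ContinuousMultilinearMap.toMultilinearMap_injective <|
      Module.Basis.ext_multilinear (fun _ ↦ (EuclideanSpace.basisFun (Fin d) ℝ).toBasis)
        fun v ↦ ?_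
    set w : Fin (n + 1) → EuclideanSpace ℝ (Fin d) := fun i ↦ EuclideanSpace.single (v i) 1
    suffices iteratedFDeriv ℝ (n + 1) f x w = 0 by simpa [w] using this
    rw [← Fin.snoc_init_self w, ← iteratedFDeriv_pderivE hf,
      ih (hf.pderivE _) fun l ↦ h (_ :: l)]
    rfl

end PartialDerivatives

lemma AnalyticAt.eventuallyEq_zero_of_iteratedFDeriv_eq_zero {𝕜 E F : Type*}
    [NontriviallyNormedField 𝕜] [CharZero 𝕜] [NormedAddCommGroup E] [NormedSpace 𝕜 E]
    [NormedAddCommGroup F] [NormedSpace 𝕜 F] [CompleteSpace F]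
    {f : E → F} {x : E} (hf : AnalyticAt 𝕜 f x) (h : ∀ n, iteratedFDeriv 𝕜 n f x = 0) :
    f =ᶠ[𝓝 x] 0 := by
  obtain ⟨p, r, hp⟩ := hf
  filter_upwards [Metric.eball_mem_nhds x hp.r_pos] with y hy
  have hsum := hp.hasSum_iteratedFDeriv (y := y - x) (by simpa [edist_eq_enorm_sub] using hy)
  simp only [h, zero_apply, smul_zero, add_sub_cancel] at hsum
  exact hsum.unique hasSum_zero

theorem zero_set_subset_union_G {d : ℕ}
    (U : Set (EuclideanSpace ℝ (Fin d))) (hU : IsOpen U) (hUconn : IsConnected U)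
    (A : EuclideanSpace ℝ (Fin d) → ℝ) (hA : AnalyticOn ℝ A U)
    (hne : ¬ ∀ x ∈ U, A x = 0) :
    {x ∈ U | A x = 0} ⊆
      ⋃ t : Fin d → ℕ, {x ∈ U | mderiv t A x = 0 ∧ gradient (mderiv t A) x ≠ 0} := by
  have hA' : AnalyticOnNhd ℝ A U := hU.analyticOn_iff_analyticOnNhd.mp hA
  have hsmooth : ContDiffOn ℝ ∞ A U := hA'.contDiffOn hU.uniqueDiffOn
  rintro x ⟨hxU, hAx⟩
  by_contra hx
  have hG (t : Fin d → ℕ) (h0 : mderiv t A x = 0) : gradient (mderiv t A) x = 0 := by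
    by_contra hg
    exact hx (mem_iUnion.2 ⟨t, hxU, h0, hg⟩)
  have hflat : A =ᶠ[𝓝 x] 0 :=
    (hA' x hxU).eventuallyEq_zero_of_iteratedFDeriv_eq_zero <|
      iteratedFDeriv_eq_zero_of_mderivList_eq_zero (hsmooth.contDiffAt (hU.mem_nhds hxU)) <|
        mderivList_eq_zero_of_gradient_mderiv_eq_zero hU hsmooth hxU hAx hG
  exact hne fun y hy ↦
    hA'.eqOn_zero_of_preconnected_of_eventuallyEq_zero hUconn.isPreconnected hxU hflat hy
end
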